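/- arXiv:2207.09852 — 5 statements merged into one kernel-verified Lean document; each statement's English description precedes it below -/
import Mathlib

section
/- Let 𝒳 be a real Banach space, Θ an index set, y : [0,1] → 𝒳 continuous, and {g_θ}_{θ∈Θ} a family of functions 𝒳 → ℝ equicontinuous at every point of the image {y_t : t ∈ [0,1]}. Let (Ω, ℱ, P) be a probability space and, along a filter l on an index type (a net), let Y^ι : Ω × [0,1] → 𝒳 be stochastic processes with bounded paths such that the maps ω ↦ sup_{t∈[0,1]} ‖Y^ι_t(ω) − y_t‖ and ω ↦ sup_{θ∈Θ} sup_{t∈[0,1]} |g_θ(Y^ι_t(ω)) − g_θ(y_t)| are measurable. If for every δ > 0, P( sup_{t∈[0,1]} ‖Y^ι_t − y_t‖ > δ ) → 0 along l, then for every η > 0, P( sup_{θ∈Θ} sup_{t∈[0,1]} |g_θ(Y^ι_t) − g_θ(y_t)| > η ) → 0 along l. -/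
/-! The point evaluations `x ↦ (g_θ x)_θ` form a map into `Θ →ᵤ ℝ` that is continuous at every
point of the compact curve `y([0,1])`, so Heine–Cantor yields one `δ` that works along the whole
curve. On the event `sup_t ‖Y_t - y_t‖ < δ` every `|g_θ(Y_t) - g_θ(y_t)|` is then below `η`, so the
event in the conclusion is contained in one whose probability tends to zero. -/

open Set MeasureTheory
open Uniformity UniformConvergence

theorem IsCompact.exists_forall_dist_lt_of_equicontinuousAt {α β Θ : Type*}
    [PseudoMetricSpace α] [PseudoMetricSpace β] {K : Set α} (hK : IsCompact K)
    {F : Θ → α → β} (hF : ∀ x ∈ K, EquicontinuousAt F x) {ε : ℝ} (hε : 0 < ε) :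
    ∃ δ > 0, ∀ x ∈ K, ∀ x', dist x x' < δ → ∀ θ, dist (F θ x) (F θ x') < ε := by
  have hr : UniformFun.gen Θ β {p | dist p.1 p.2 < ε} ∈ 𝓤 (Θ →ᵤ β) :=
    (UniformFun.hasBasis_uniformity Θ β).mem_of_mem (Metric.dist_mem_uniformity hε)
  have hcont : ∀ x ∈ K, ContinuousAt (UniformFun.ofFun ∘ Function.swap F) x :=
    fun x hx => equicontinuousAt_iff_continuousAt.1 (hF x hx)
  obtain ⟨δ, hδ, hsub⟩ := Metric.mem_uniformity_dist.1
    (hK.uniformContinuousAt_of_continuousAt _ hcont hr)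
  exact ⟨δ, hδ, fun x hx x' hxx' => hsub hxx' hx⟩

theorem iSup_iSup_abs_sub_le_of_iSup_norm_sub_lt {T Θ X : Type*} [SeminormedAddCommGroup X]
    {u v : T → X} (hbdd : BddAbove (range fun t => ‖u t - v t‖)) {F : Θ → X → ℝ} {δ η : ℝ}
    (hη : 0 ≤ η) (hF : ∀ t x, dist (v t) x < δ → ∀ θ, dist (F θ (v t)) (F θ x) < η)
    (hδ : ⨆ t, ‖u t - v t‖ < δ) :
    ⨆ θ, ⨆ t, |F θ (u t) - F θ (v t)| ≤ η := by
  refine Real.iSup_le (fun θ => Real.iSup_le (fun t => ?_) hη) hη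
  have hclose : dist (v t) (u t) < δ := by
    rw [dist_comm, dist_eq_norm]
    exact (le_ciSup hbdd t).trans_lt hδ
  rw [← Real.dist_eq, dist_comm]
  exact (hF t (u t) hclose θ).le

theorem bddAbove_range_norm_sub {T X : Type*} [SeminormedAddCommGroup X] {u v : T → X}
    {s : Set T} (hu : Bornology.IsBounded (u '' s)) (hv : Bornology.IsBounded (v '' s)) :
    BddAbove (range fun t : s => ‖u t - v t‖) := by
  obtain ⟨Cu, hCu⟩ := hu.exists_norm_le
  obtain ⟨Cv, hCv⟩ := hv.exists_norm_le
  refine ⟨Cu + Cv, forall_mem_range.2 fun t => ?_⟩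
  exact (norm_sub_le _ _).trans
    (add_le_add (hCu _ (mem_image_of_mem u t.2)) (hCv _ (mem_image_of_mem v t.2)))

theorem stmt_1_general {X Θ ι Ω : Type*} [NormedAddCommGroup X]
    [MeasurableSpace Ω] (P : Measure Ω)
    (l : Filter ι) (y : ℝ → X) (g : Θ → X → ℝ)
    (hy : ContinuousOn y (Set.Icc 0 1))
    (heq : ∀ x ∈ y '' Set.Icc (0:ℝ) 1, ∀ ε > 0, ∃ δ > 0,
      ∀ x' : X, ‖x' - x‖ < δ → ∀ θ : Θ, |g θ x' - g θ x| < ε)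
    (Y : ι → Ω → ℝ → X)
    (hbdd : ∀ i ω, Bornology.IsBounded (Y i ω '' Set.Icc (0:ℝ) 1))
    (hconv : ∀ δ > 0, Filter.Tendsto
      (fun i => P {ω | δ < ⨆ t : Set.Icc (0:ℝ) 1, ‖Y i ω t - y t‖}) l (nhds 0)) :
    ∀ η > 0, Filter.Tendsto
      (fun i => P {ω | η < ⨆ θ : Θ, ⨆ t : Set.Icc (0:ℝ) 1, |g θ (Y i ω t) - g θ (y t)|})
      l (nhds 0) := by
  intro η hη
  have hK : IsCompact (y '' Icc 0 1) := isCompact_Icc.image_of_continuousOn hy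
  have hequi : ∀ x ∈ y '' Icc 0 1, EquicontinuousAt g x := fun x hx =>
    Metric.equicontinuousAt_iff.2 fun ε hε => by
      simpa only [dist_eq_norm, Real.norm_eq_abs, abs_sub_comm] using heq x hx ε hε
  obtain ⟨δ, hδ, hclose⟩ := hK.exists_forall_dist_lt_of_equicontinuousAt hequi hη
  have hsup : ∀ i ω, ⨆ t : Icc (0:ℝ) 1, ‖Y i ω t - y t‖ ≤ δ / 2 →
      ⨆ θ : Θ, ⨆ t : Icc (0:ℝ) 1, |g θ (Y i ω t) - g θ (y t)| ≤ η := fun i ω h =>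
    iSup_iSup_abs_sub_le_of_iSup_norm_sub_lt (bddAbove_range_norm_sub (hbdd i ω) hK.isBounded)
      hη.le (fun t => hclose _ (mem_image_of_mem y t.2)) (by linarith)
  exact tendsto_of_tendsto_of_tendsto_of_le_of_le tendsto_const_nhds (hconv (δ / 2) (by positivity))
    (fun i => zero_le) fun i => measure_mono fun ω => lt_imp_lt_of_le_imp_le (hsup i ω)

/-- Lemma A.2: localized continuous mapping theorem for convergence in probability
along a net (filter) of stochastic processes. -/
theorem stmt_1 {X Θ ι Ω : Type*} [NormedAddCommGroup X] [NormedSpace ℝ X]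
    [MeasurableSpace Ω] (P : Measure Ω) [IsProbabilityMeasure P]
    (l : Filter ι) (y : ℝ → X) (g : Θ → X → ℝ)
    (hy : ContinuousOn y (Set.Icc 0 1))
    (heq : ∀ x ∈ y '' Set.Icc (0:ℝ) 1, ∀ ε > 0, ∃ δ > 0,
      ∀ x' : X, ‖x' - x‖ < δ → ∀ θ : Θ, |g θ x' - g θ x| < ε)
    (Y : ι → Ω → ℝ → X)
    (hbdd : ∀ i ω, Bornology.IsBounded (Y i ω '' Set.Icc (0:ℝ) 1))
    (hmeas1 : ∀ i, Measurable fun ω => ⨆ t : Set.Icc (0:ℝ) 1, ‖Y i ω t - y t‖)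
    (hmeas2 : ∀ i, Measurable fun ω =>
      ⨆ θ : Θ, ⨆ t : Set.Icc (0:ℝ) 1, |g θ (Y i ω t) - g θ (y t)|)
    (hconv : ∀ δ > 0, Filter.Tendsto
      (fun i => P {ω | δ < ⨆ t : Set.Icc (0:ℝ) 1, ‖Y i ω t - y t‖}) l (nhds 0)) :
    ∀ η > 0, Filter.Tendsto
      (fun i => P {ω | η < ⨆ θ : Θ, ⨆ t : Set.Icc (0:ℝ) 1, |g θ (Y i ω t) - g θ (y t)|})
      l (nhds 0) :=
  stmt_1_general P l y g hy heq Y hbdd hconv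
end

section
/- Let (Ω, ℱ, P) be a probability space, 𝒳 a real Banach space, n ∈ ℕ, and ℱ_0 ⊆ ℱ_1 ⊆ … ⊆ ℱ_n ⊆ ℱ a filtration. Let χ_1, …, χ_n be Bochner-integrable 𝒳-valued random variables with χ_i measurable with respect to ℱ_i for each i. Then for all η > 0 and η' > 0, P( ‖ ∑_{i=1}^n χ_i ‖ > η ) ≤ η'/η + P( ∑_{i=1}^n E[ ‖χ_i‖ | ℱ_{i−1} ] > η' ). -/
/-!
Truncate the sum at the events `A i = {∑_{j ≤ i} E[‖χ j‖ | G (j-1)] ≤ η'}`, which lie in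
`G (i-1)`. Hence `E[1_{A i} ‖χ i‖] = E[1_{A i} E[‖χ i‖ | G (i-1)]]`, and the conditional
increments summed over the indices with `ω ∈ A i` never exceed `η'`; so the truncated sum has
`E ‖·‖ ≤ η'` and Markov's inequality bounds its tail by `η'/η`. Since the compensator is
nondecreasing, the truncated sum is the full sum outside `{compensator > η'}`.
-/

open MeasureTheory

theorem sum_Icc_ite_partialSum_le {a : ℕ → ℝ} (ha : ∀ i, 0 ≤ a i) {c : ℝ} (hc : 0 ≤ c) :
    ∀ n, ∑ i ∈ Finset.Icc 1 n, (if ∑ j ∈ Finset.Icc 1 i, a j ≤ c then a i else 0) ≤ c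
  | 0 => by simpa using hc
  | n + 1 => by
    by_cases hS : ∑ j ∈ Finset.Icc 1 (n + 1), a j ≤ c
    · calc _ ≤ ∑ i ∈ Finset.Icc 1 (n + 1), a i :=
            Finset.sum_le_sum fun i _ => by split_ifs <;> simp [ha i]
        _ ≤ c := hS
    · rw [Finset.sum_Icc_succ_top (by omega), if_neg hS, add_zero]
      exact sum_Icc_ite_partialSum_le ha hc n

theorem measure_lt_le_ofReal_div {Ω : Type*} {m0 : MeasurableSpace Ω} {μ : Measure Ω}
    [IsFiniteMeasure μ] {g : Ω → ℝ} (hg0 : 0 ≤ᵐ[μ] g) (hg : Integrable g μ) {η c : ℝ}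
    (hη : 0 < η) (hgc : ∫ ω, g ω ∂μ ≤ c) : μ {ω | η < g ω} ≤ ENNReal.ofReal (c / η) := by
  have hmarkov : μ.real {ω | η ≤ g ω} ≤ c / η := by
    rw [le_div_iff₀ hη, mul_comm]
    exact (mul_meas_ge_le_integral_of_nonneg hg0 hg η).trans hgc
  calc μ {ω | η < g ω} ≤ μ {ω | η ≤ g ω} := measure_mono fun ω (h : η < g ω) => h.le
    _ = ENNReal.ofReal (μ.real {ω | η ≤ g ω}) := (ofReal_measureReal (measure_ne_top _ _)).symm
    _ ≤ ENNReal.ofReal (c / η) := ENNReal.ofReal_le_ofReal hmarkov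

section NormCompensator

variable {Ω X : Type*} [NormedAddCommGroup X] {m0 : MeasurableSpace Ω}
  (P : Measure Ω) (G : ℕ → MeasurableSpace Ω) (χ : ℕ → Ω → X)

noncomputable def normCompensator (k : ℕ) (ω : Ω) : ℝ :=
  ∑ i ∈ Finset.Icc 1 k, (P[fun ω' => ‖χ i ω'‖|G (i - 1)]) ω

noncomputable def truncatedSum (c : ℝ) (n : ℕ) (ω : Ω) : X :=
  ∑ i ∈ Finset.Icc 1 n, {ω' | normCompensator P G χ i ω' ≤ c}.indicator (χ i) ω

theorem ae_forall_condExp_norm_nonneg :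
    ∀ᵐ ω ∂P, ∀ i, 0 ≤ (P[fun ω' => ‖χ i ω'‖|G (i - 1)]) ω :=
  ae_all_iff.2 fun _ => condExp_nonneg (.of_forall fun _ => norm_nonneg _)

variable {P G χ}

theorem normCompensator_mono {ω : Ω} (hω : ∀ i, 0 ≤ (P[fun ω' => ‖χ i ω'‖|G (i - 1)]) ω) :
    Monotone fun k => normCompensator P G χ k ω := fun _ _ hkl =>
  Finset.sum_le_sum_of_subset_of_nonneg (Finset.Icc_subset_Icc_right hkl) fun i _ _ => hω i

theorem stronglyMeasurable_normCompensator (hG : Monotone G) (k : ℕ) :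
    StronglyMeasurable[G (k - 1)] (normCompensator P G χ k) :=
  Finset.stronglyMeasurable_fun_sum _ fun i hi =>
    stronglyMeasurable_condExp.mono (hG (by have := (Finset.mem_Icc.1 hi).2; omega))

theorem truncatedSum_eq_sum {ω : Ω} (hω : ∀ i, 0 ≤ (P[fun ω' => ‖χ i ω'‖|G (i - 1)]) ω)
    {c : ℝ} {n : ℕ} (hn : normCompensator P G χ n ω ≤ c) :
    truncatedSum P G χ c n ω = ∑ i ∈ Finset.Icc 1 n, χ i ω :=
  Finset.sum_congr rfl fun i hi =>
    Set.indicator_of_mem (s := {ω' | normCompensator P G χ i ω' ≤ c})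
      ((normCompensator_mono hω (Finset.mem_Icc.1 hi).2).trans hn) _

theorem measurableSet_normCompensator_le (hG : Monotone G) (k : ℕ) (c : ℝ) :
    MeasurableSet[G (k - 1)] {ω | normCompensator P G χ k ω ≤ c} :=
  (stronglyMeasurable_normCompensator hG k).measurable measurableSet_Iic

theorem integrable_truncatedSum (hG : Monotone G) (hGle : ∀ i, G i ≤ m0) {n : ℕ}
    (hint : ∀ i ∈ Finset.Icc 1 n, Integrable (χ i) P) {c : ℝ} :
    Integrable (truncatedSum P G χ c n) P :=
  integrable_finsetSum _ fun i hi =>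
    (hint i hi).indicator (hGle _ _ (measurableSet_normCompensator_le hG i c))

theorem integral_norm_truncatedSum_le [IsProbabilityMeasure P] (hG : Monotone G)
    (hGle : ∀ i, G i ≤ m0) {n : ℕ} (hint : ∀ i ∈ Finset.Icc 1 n, Integrable (χ i) P)
    {c : ℝ} (hc : 0 ≤ c) :
    ∫ ω, ‖truncatedSum P G χ c n ω‖ ∂P ≤ c := by
  set f : ℕ → Ω → ℝ := fun i => P[fun ω' => ‖χ i ω'‖|G (i - 1)]
  set A : ℕ → Set Ω := fun i => {ω | normCompensator P G χ i ω ≤ c}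
  have hAG : ∀ i, MeasurableSet[G (i - 1)] (A i) := fun i =>
    measurableSet_normCompensator_le hG i c
  have hA : ∀ i, MeasurableSet (A i) := fun i => hGle _ _ (hAG i)
  have hnorm_int : ∀ i ∈ Finset.Icc 1 n, Integrable ((A i).indicator fun ω => ‖χ i ω‖) P :=
    fun i hi => (hint i hi).norm.indicator (hA i)
  have hf_int : ∀ i ∈ Finset.Icc 1 n, Integrable ((A i).indicator (f i)) P :=
    fun i _ => integrable_condExp.indicator (hA i)
  calc ∫ ω, ‖truncatedSum P G χ c n ω‖ ∂P
      ≤ ∫ ω, ∑ i ∈ Finset.Icc 1 n, (A i).indicator (fun ω' => ‖χ i ω'‖) ω ∂P := by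
        refine integral_mono (integrable_truncatedSum hG hGle hint).norm
          (integrable_finsetSum _ hnorm_int) fun ω => ?_
        refine (norm_sum_le _ _).trans_eq (Finset.sum_congr rfl fun i _ => ?_)
        exact norm_indicator_eq_indicator_norm _ _
    _ = ∫ ω, ∑ i ∈ Finset.Icc 1 n, (A i).indicator (f i) ω ∂P := by
        rw [integral_finsetSum _ hnorm_int, integral_finsetSum _ hf_int]
        refine Finset.sum_congr rfl fun i hi => ?_
        rw [integral_indicator (hA i), integral_indicator (hA i)]
        exact (setIntegral_condExp (hGle (i - 1)) (hint i hi).norm (hAG i)).symm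
    _ ≤ ∫ _, c ∂P := by
        refine integral_mono_ae (integrable_finsetSum _ hf_int) (integrable_const c) ?_
        filter_upwards [ae_forall_condExp_norm_nonneg P G χ] with ω hω
        refine (Finset.sum_congr rfl fun i _ => ?_).trans_le (sum_Icc_ite_partialSum_le hω hc n)
        simp only [Set.indicator_apply, A, f, normCompensator, Set.mem_ofPred_eq]
    _ = c := by simp

end NormCompensator

theorem stmt_3_general {Ω X : Type*} [NormedAddCommGroup X]
    {m0 : MeasurableSpace Ω} (P : Measure Ω) [IsProbabilityMeasure P]
    (n : ℕ) (G : ℕ → MeasurableSpace Ω)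
    (hGmono : Monotone G) (hGle : ∀ i, G i ≤ m0)
    (χ : ℕ → Ω → X)
    (hint : ∀ i ∈ Finset.Icc 1 n, Integrable (χ i) P) :
    ∀ η : ℝ, 0 < η → ∀ η' : ℝ, 0 < η' →
      P {ω | η < ‖∑ i ∈ Finset.Icc 1 n, χ i ω‖} ≤
        ENNReal.ofReal (η' / η) +
        P {ω | η' < ∑ i ∈ Finset.Icc 1 n, (P[fun ω' => ‖χ i ω'‖|G (i - 1)]) ω} := by
  intro η hη η' hη'
  have hsplit : {ω | η < ‖∑ i ∈ Finset.Icc 1 n, χ i ω‖} ≤ᵐ[P]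
      ({ω | η < ‖truncatedSum P G χ η' n ω‖} ∪ {ω | η' < normCompensator P G χ n ω} : Set Ω) := by
    filter_upwards [ae_forall_condExp_norm_nonneg P G χ] with ω hω hη_lt
    by_cases hn : normCompensator P G χ n ω ≤ η'
    · left
      show η < ‖truncatedSum P G χ η' n ω‖
      rwa [truncatedSum_eq_sum hω hn]
    · exact Or.inr (not_le.1 hn)
  have hmarkov : P {ω | η < ‖truncatedSum P G χ η' n ω‖} ≤ ENNReal.ofReal (η' / η) :=
    measure_lt_le_ofReal_div (.of_forall fun _ => norm_nonneg _)
      (integrable_truncatedSum hGmono hGle hint).norm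
      hη (integral_norm_truncatedSum_le hGmono hGle hint hη'.le)
  calc _ ≤ P ({ω | η < ‖truncatedSum P G χ η' n ω‖} ∪ {ω | η' < normCompensator P G χ n ω}) :=
        measure_mono_ae hsplit
    _ ≤ _ := (measure_union_le _ _).trans (add_le_add_left hmarkov _)

/-- Key inequality in the proof of Lemma A.3 (a Lenglart-type inequality for
Banach-space-valued random variables). -/
theorem stmt_3 {Ω X : Type*} [NormedAddCommGroup X] [NormedSpace ℝ X]
    {m0 : MeasurableSpace Ω} (P : Measure Ω) [IsProbabilityMeasure P]
    (n : ℕ) (G : ℕ → MeasurableSpace Ω)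
    (hGmono : Monotone G) (hGle : ∀ i, G i ≤ m0)
    (χ : ℕ → Ω → X)
    (hint : ∀ i ∈ Finset.Icc 1 n, Integrable (χ i) P)
    (hmeas : ∀ i ∈ Finset.Icc 1 n, StronglyMeasurable[G i] (χ i)) :
    ∀ η : ℝ, 0 < η → ∀ η' : ℝ, 0 < η' →
      P {ω | η < ‖∑ i ∈ Finset.Icc 1 n, χ i ω‖} ≤
        ENNReal.ofReal (η' / η) +
        P {ω | η' < ∑ i ∈ Finset.Icc 1 n, (P[fun ω' => ‖χ i ω'‖|G (i - 1)]) ω} :=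
  stmt_3_general P n G hGmono hGle χ hint
end

section
/- Let (Ω, ℱ, P) be a probability space and 𝒳 a real Banach space. Along a filter l on an index type, suppose for each index ι one is given n(ι) ∈ ℕ, a filtration 𝒢^ι_0 ⊆ … ⊆ 𝒢^ι_{n(ι)} ⊆ ℱ, and Bochner-integrable 𝒳-valued random variables χ^ι_1, …, χ^ι_{n(ι)} with χ^ι_i measurable with respect to 𝒢^ι_i. If for every η > 0, P( ∑_{i=1}^{n(ι)} E[ ‖χ^ι_i‖ | 𝒢^ι_{i−1} ] > η ) → 0 along l, then for every η > 0, P( ‖ ∑_{i=1}^{n(ι)} χ^ι_i ‖ > η ) → 0 along l. -/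
/-!
Lenglart's domination argument. As `‖∑ χ_k‖ ≤ ∑ ‖χ_k‖`, only the nonnegative real increments
`Y_k = ‖χ_k‖` matter. Stop their sum at the last index `k` at which the compensator
`∑_{j ≤ k} E[Y_j | 𝒢_{j-1}]` is still at most `ε`; the compensator is predictable, so the
stopping event for `Y_k` lies in `𝒢_{k-1}` and the stopped sum has expectation at most `ε`.
Markov's inequality bounds the probability that the stopped sum exceeds `η` by `ε / η`, and the
stopped and unstopped sums agree outside `{ε < compensator}`, whose probability tends to zero.
-/

open MeasureTheory Filter Finset Topology
open scoped ENNReal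

theorem sum_Icc_ite_sum_le_le {ε : ℝ} (hε : 0 ≤ ε) {e : ℕ → ℝ} (he : ∀ k, 0 ≤ e k) (n : ℕ) :
    ∑ k ∈ Icc 1 n, (if ∑ j ∈ Icc 1 k, e j ≤ ε then e k else 0) ≤ ε := by
  induction n with
  | zero => simpa using hε
  | succ m ih =>
    by_cases h : ∑ j ∈ Icc 1 (m + 1), e j ≤ ε
    · refine le_trans (sum_le_sum fun k _ => ?_) h
      split_ifs <;> simp [he k]
    · rw [sum_Icc_succ_top (by omega), if_neg h, add_zero]
      exact ih

theorem ENNReal.tendsto_nhds_zero_of_forall_le_ofReal_add {ι : Type*} {l : Filter ι}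
    {f : ι → ℝ≥0∞}
    (h : ∀ δ : ℝ, 0 < δ → ∃ g : ι → ℝ≥0∞, Tendsto g l (𝓝 0) ∧
      ∀ᶠ i in l, f i ≤ ENNReal.ofReal δ + g i) :
    Tendsto f l (𝓝 0) := by
  rw [ENNReal.tendsto_nhds_zero]
  intro δ hδ
  obtain ⟨r, -, hr0, hrδ⟩ := ENNReal.lt_iff_exists_real_btwn.mp (ENNReal.half_pos hδ.ne')
  obtain ⟨g, hg, hfg⟩ := h r (ENNReal.ofReal_pos.mp hr0)
  filter_upwards [hfg, ENNReal.tendsto_nhds_zero.mp hg _ (ENNReal.half_pos hδ.ne')]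
    with i hfi hgi
  calc f i ≤ ENNReal.ofReal r + g i := hfi
    _ ≤ δ / 2 + δ / 2 := add_le_add hrδ.le hgi
    _ = δ := ENNReal.add_halves δ

noncomputable def compensator {Ω : Type*} {m0 : MeasurableSpace Ω} (P : Measure Ω)
    (G : ℕ → MeasurableSpace Ω) (Y : ℕ → Ω → ℝ) (n : ℕ) (ω : Ω) : ℝ :=
  ∑ k ∈ Icc 1 n, P[Y k | G (k - 1)] ω

section Compensator

variable {Ω : Type*} {m0 : MeasurableSpace Ω} {P : Measure Ω} {G : ℕ → MeasurableSpace Ω}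
  {Y : ℕ → Ω → ℝ}

theorem stronglyMeasurable_compensator (hG : Monotone G) (n : ℕ) :
    StronglyMeasurable[G (n - 1)] (compensator P G Y n) :=
  Finset.stronglyMeasurable_fun_sum _ fun _ hk =>
    stronglyMeasurable_condExp.mono (hG (Nat.sub_le_sub_right (mem_Icc.mp hk).2 1))

theorem ae_forall_condExp_nonneg (hY : ∀ k, 0 ≤ Y k) :
    ∀ᵐ ω ∂P, ∀ k, 0 ≤ P[Y k | G (k - 1)] ω :=
  ae_all_iff.mpr fun k => condExp_nonneg (ae_of_all _ (hY k))

theorem compensator_mono_of_condExp_nonneg {ω : Ω} (hω : ∀ k, 0 ≤ P[Y k | G (k - 1)] ω) :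
    Monotone fun n => compensator P G Y n ω := fun _ _ hkn =>
  sum_le_sum_of_subset_of_nonneg (Icc_subset_Icc_right hkn) fun k _ _ => hω k

variable [IsProbabilityMeasure P]

theorem integral_sum_indicator_compensator_le (hG : Monotone G) (hGle : ∀ k, G k ≤ m0)
    (hY : ∀ k, 0 ≤ Y k) {N : ℕ} (hint : ∀ k ∈ Icc 1 N, Integrable (Y k) P) {ε : ℝ}
    (hε : 0 ≤ ε) :
    ∫ ω, ∑ k ∈ Icc 1 N, {ω | compensator P G Y k ω ≤ ε}.indicator (Y k) ω ∂P ≤ ε := by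
  set A : ℕ → Set Ω := fun k => {ω | compensator P G Y k ω ≤ ε}
  have hA : ∀ k, MeasurableSet[G (k - 1)] (A k) := fun k =>
    (stronglyMeasurable_compensator hG k).measurable measurableSet_Iic
  have hA0 : ∀ k, MeasurableSet (A k) := fun k => hGle _ _ (hA k)
  have hstopped : ∀ᵐ ω ∂P, ∑ k ∈ Icc 1 N, (A k).indicator (P[Y k | G (k - 1)]) ω ≤ ε := by
    filter_upwards [ae_forall_condExp_nonneg (G := G) hY] with ω hω
    simpa only [A, Set.indicator_apply, Set.mem_ofPred_eq, compensator] using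
      sum_Icc_ite_sum_le_le hε hω N
  calc ∫ ω, ∑ k ∈ Icc 1 N, (A k).indicator (Y k) ω ∂P
      = ∑ k ∈ Icc 1 N, ∫ ω, (A k).indicator (Y k) ω ∂P :=
        integral_finsetSum _ fun k hk => (hint k hk).indicator (hA0 k)
    _ = ∑ k ∈ Icc 1 N, ∫ ω, (A k).indicator (P[Y k | G (k - 1)]) ω ∂P := by
        refine sum_congr rfl fun k hk => ?_
        rw [integral_indicator (hA0 k), integral_indicator (hA0 k),
          setIntegral_condExp (hGle _) (hint k hk) (hA k)]
    _ = ∫ ω, ∑ k ∈ Icc 1 N, (A k).indicator (P[Y k | G (k - 1)]) ω ∂P :=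
        (integral_finsetSum _ fun k _ => integrable_condExp.indicator (hA0 k)).symm
    _ ≤ ∫ _, ε ∂P := integral_mono_ae
        (integrable_finsetSum _ fun k _ => integrable_condExp.indicator (hA0 k))
        (integrable_const ε) hstopped
    _ = ε := by simp

theorem measure_lt_sum_le_add_measure_lt_compensator (hG : Monotone G)
    (hGle : ∀ k, G k ≤ m0) (hY : ∀ k, 0 ≤ Y k) {N : ℕ}
    (hint : ∀ k ∈ Icc 1 N, Integrable (Y k) P) {ε η : ℝ} (hε : 0 ≤ ε) (hη : 0 < η) :
    P {ω | η < ∑ k ∈ Icc 1 N, Y k ω} ≤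
      ENNReal.ofReal (ε / η) + P {ω | ε < compensator P G Y N ω} := by
  set T : Ω → ℝ := fun ω => ∑ k ∈ Icc 1 N, {ω | compensator P G Y k ω ≤ ε}.indicator (Y k) ω
  have hT_int : Integrable T P := integrable_finsetSum _ fun k hk =>
    (hint k hk).indicator (hGle _ _ ((stronglyMeasurable_compensator hG k).measurable
      measurableSet_Iic))
  have hmarkov : P {ω | η ≤ T ω} ≤ ENNReal.ofReal (ε / η) := by
    rw [← ofReal_measureReal]
    refine ENNReal.ofReal_le_ofReal ((le_div_iff₀' hη).mpr ?_)
    refine (mul_meas_ge_le_integral_of_nonneg (ae_of_all _ fun ω => ?_) hT_int η).trans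
      (integral_sum_indicator_compensator_le hG hGle hY hint hε)
    exact sum_nonneg fun k _ => Set.indicator_nonneg (fun x _ => hY k x) ω
  have hcover : {ω | η < ∑ k ∈ Icc 1 N, Y k ω} ≤ᵐ[P]
      ({ω | η ≤ T ω} ∪ {ω | ε < compensator P G Y N ω} : Set Ω) := by
    filter_upwards [ae_forall_condExp_nonneg (G := G) hY] with ω hω hlt
    rcases le_or_gt (compensator P G Y N ω) ε with hN | hN
    · refine Or.inl (le_of_lt (hlt.trans_eq (sum_congr rfl fun k hk => ?_)))
      have hωk : ω ∈ {ω | compensator P G Y k ω ≤ ε} :=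
        (compensator_mono_of_condExp_nonneg hω (mem_Icc.mp hk).2).trans hN
      exact (Set.indicator_of_mem hωk (Y k)).symm
    · exact Or.inr hN
  calc P {ω | η < ∑ k ∈ Icc 1 N, Y k ω}
      ≤ P ({ω | η ≤ T ω} ∪ {ω | ε < compensator P G Y N ω}) := measure_mono_ae hcover
    _ ≤ P {ω | η ≤ T ω} + P {ω | ε < compensator P G Y N ω} := measure_union_le _ _
    _ ≤ ENNReal.ofReal (ε / η) + P {ω | ε < compensator P G Y N ω} := by gcongr

end Compensator

theorem stmt_4_general {Ω X ι : Type*} [NormedAddCommGroup X] [NormedSpace ℝ X]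
    {m0 : MeasurableSpace Ω} (P : Measure Ω) [IsProbabilityMeasure P]
    (l : Filter ι) (n : ι → ℕ) (G : ι → ℕ → MeasurableSpace Ω)
    (hGmono : ∀ i, Monotone (G i)) (hGle : ∀ i k, G i k ≤ m0)
    (χ : ι → ℕ → Ω → X)
    (hint : ∀ i, ∀ k ∈ Finset.Icc 1 (n i), Integrable (χ i k) P)
    (hcond : ∀ η : ℝ, 0 < η → Filter.Tendsto
      (fun i => P {ω | η <
        ∑ k ∈ Finset.Icc 1 (n i), (P[fun ω' => ‖χ i k ω'‖|G i (k - 1)]) ω}) l (nhds 0)) :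
    ∀ η : ℝ, 0 < η → Filter.Tendsto
      (fun i => P {ω | η < ‖∑ k ∈ Finset.Icc 1 (n i), χ i k ω‖}) l (nhds 0) := by
  intro η hη
  refine ENNReal.tendsto_nhds_zero_of_forall_le_ofReal_add fun δ hδ =>
    ⟨_, hcond (η * δ) (by positivity), Eventually.of_forall fun i => ?_⟩
  calc P {ω | η < ‖∑ k ∈ Icc 1 (n i), χ i k ω‖}
      ≤ P {ω | η < ∑ k ∈ Icc 1 (n i), ‖χ i k ω‖} :=
        measure_mono fun ω h => h.trans_le (norm_sum_le _ _)
    _ ≤ ENNReal.ofReal (η * δ / η) +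
          P {ω | η * δ < compensator P (G i) (fun k ω => ‖χ i k ω‖) (n i) ω} :=
        measure_lt_sum_le_add_measure_lt_compensator (hGmono i) (hGle i)
          (fun k ω => norm_nonneg _) (fun k hk => (hint i k hk).norm) (by positivity) hη
    _ = ENNReal.ofReal δ +
          P {ω | η * δ < ∑ k ∈ Icc 1 (n i), (P[fun ω' => ‖χ i k ω'‖|G i (k - 1)]) ω} := by
        rw [mul_div_cancel_left₀ _ hη.ne']
        rfl

/-- Lemma A.3 (i): a Banach-space-valued version of Lemma 9 of
Genon-Catalot and Jacod (1993), along a net of indices. -/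
theorem stmt_4 {Ω X ι : Type*} [NormedAddCommGroup X] [NormedSpace ℝ X]
    {m0 : MeasurableSpace Ω} (P : Measure Ω) [IsProbabilityMeasure P]
    (l : Filter ι) (n : ι → ℕ) (G : ι → ℕ → MeasurableSpace Ω)
    (hGmono : ∀ i, Monotone (G i)) (hGle : ∀ i k, G i k ≤ m0)
    (χ : ι → ℕ → Ω → X)
    (hint : ∀ i, ∀ k ∈ Finset.Icc 1 (n i), Integrable (χ i k) P)
    (hmeas : ∀ i, ∀ k ∈ Finset.Icc 1 (n i), StronglyMeasurable[G i k] (χ i k))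
    (hcond : ∀ η : ℝ, 0 < η → Filter.Tendsto
      (fun i => P {ω | η <
        ∑ k ∈ Finset.Icc 1 (n i), (P[fun ω' => ‖χ i k ω'‖|G i (k - 1)]) ω}) l (nhds 0)) :
    ∀ η : ℝ, 0 < η → Filter.Tendsto
      (fun i => P {ω | η < ‖∑ k ∈ Finset.Icc 1 (n i), χ i k ω‖}) l (nhds 0) :=
  stmt_4_general P l n G hGmono hGle χ hint hcond
end

section
/- Let (Ω, ℱ, P) be a probability space and 𝒳 a real Banach space. For each index ι in some index set, suppose given n(ι) ∈ ℕ, a filtration 𝒢^ι_0 ⊆ … ⊆ 𝒢^ι_{n(ι)} ⊆ ℱ, and Bochner-integrable 𝒳-valued random variables χ^ι_1, …, χ^ι_{n(ι)} with χ^ι_i measurable with respect to 𝒢^ι_i. If lim_{M→∞} sup_ι P( ∑_{i=1}^{n(ι)} E[ ‖χ^ι_i‖ | 𝒢^ι_{i−1} ] > M ) = 0, then lim_{M→∞} sup_ι P( ‖ ∑_{i=1}^{n(ι)} χ^ι_i ‖ > M ) = 0. -/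
open MeasureTheory Filter Topology Finset
open scoped ENNReal

/-! Stop the sum just before its predictable compensator `∑ₖ E[‖χₖ‖ | 𝒢ₖ₋₁]` exceeds `C`.
The decision to keep the `k`-th term is `𝒢ₖ₋₁`-measurable, so the stopped sum has
`E‖·‖ ≤ C` and by Markov exceeds `M` with probability at most `C / M`; off the event that the
compensator exceeds `C` it is the full sum. Taking `C = √M` makes both bounds uniform in the
index and vanishing as `M → ∞`. -/

lemma sum_ite_partialSum_le {a : ℕ → ℝ} {C : ℝ} (hC : 0 ≤ C) :
    ∀ n, (∀ k ∈ Icc 1 n, 0 ≤ a k) →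
      ∑ k ∈ Icc 1 n, (if ∑ l ∈ Icc 1 k, a l ≤ C then a k else 0) ≤ C
  | 0, _ => by simpa using hC
  | n + 1, ha => by
    rw [sum_Icc_succ_top (by omega)]
    split_ifs with hstop
    · calc ∑ k ∈ Icc 1 n, (if ∑ l ∈ Icc 1 k, a l ≤ C then a k else 0) + a (n + 1)
          ≤ ∑ k ∈ Icc 1 n, a k + a (n + 1) := by
            gcongr with k hk
            split_ifs
            · exact le_rfl
            · exact ha k (Icc_subset_Icc_right n.le_succ hk)
        _ = ∑ l ∈ Icc 1 (n + 1), a l := (sum_Icc_succ_top (by omega) _).symm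
        _ ≤ C := hstop
    · rw [add_zero]
      exact sum_ite_partialSum_le hC n fun k hk => ha k (Icc_subset_Icc_right n.le_succ hk)

noncomputable section StoppedSum

variable {Ω X : Type*} [NormedAddCommGroup X] {m0 : MeasurableSpace Ω}

def condNormSum (P : Measure Ω) (G : ℕ → MeasurableSpace Ω) (χ : ℕ → Ω → X) (k : ℕ) (ω : Ω) :
    ℝ :=
  ∑ l ∈ Icc 1 k, (P[fun ω' => ‖χ l ω'‖|G (l - 1)]) ω

def stoppedSum (P : Measure Ω) (G : ℕ → MeasurableSpace Ω) (χ : ℕ → Ω → X) (C : ℝ) (n : ℕ)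
    (ω : Ω) : X :=
  ∑ k ∈ Icc 1 n, {ω | condNormSum P G χ k ω ≤ C}.indicator (χ k) ω

variable {P : Measure Ω} {G : ℕ → MeasurableSpace Ω} {χ : ℕ → Ω → X}

lemma measurableSet_condNormSum_le (hG : Monotone G) (k : ℕ) (C : ℝ) :
    MeasurableSet[G (k - 1)] {ω | condNormSum P G χ k ω ≤ C} := by
  have : StronglyMeasurable[G (k - 1)] (condNormSum P G χ k) :=
    Finset.stronglyMeasurable_fun_sum _ fun l hl =>
      stronglyMeasurable_condExp.mono (hG (by grind))
  exact this.measurable measurableSet_Iic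

lemma ae_condExp_norm_nonneg :
    ∀ᵐ ω ∂P, ∀ k, 0 ≤ (P[fun ω' => ‖χ k ω'‖|G (k - 1)]) ω :=
  ae_all_iff.2 fun _ => condExp_nonneg (ae_of_all _ fun _ => norm_nonneg _)

lemma stoppedSum_eq_sum {C : ℝ} {n : ℕ} {ω : Ω}
    (hnonneg : ∀ k, 0 ≤ (P[fun ω' => ‖χ k ω'‖|G (k - 1)]) ω) (hC : condNormSum P G χ n ω ≤ C) :
    stoppedSum P G χ C n ω = ∑ k ∈ Icc 1 n, χ k ω :=
  sum_congr rfl fun k hk => Set.indicator_of_mem (s := {ω | condNormSum P G χ k ω ≤ C})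
    ((sum_le_sum_of_subset_of_nonneg (Icc_subset_Icc_right (mem_Icc.1 hk).2)
      fun l _ _ => hnonneg l).trans hC) _

variable [IsProbabilityMeasure P]

lemma integral_norm_stoppedSum_le (hG : Monotone G) (hGle : ∀ k, G k ≤ m0) {n : ℕ}
    (hint : ∀ k ∈ Icc 1 n, Integrable (χ k) P) {C : ℝ} (hC : 0 ≤ C) :
    ∫ ω, ‖stoppedSum P G χ C n ω‖ ∂P ≤ C := by
  set f : ℕ → Ω → ℝ := fun k => P[fun ω' => ‖χ k ω'‖|G (k - 1)]
  set A : ℕ → Set Ω := fun k => {ω | condNormSum P G χ k ω ≤ C}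
  have hA : ∀ k, MeasurableSet (A k) := fun k =>
    hGle (k - 1) _ (measurableSet_condNormSum_le hG k C)
  calc ∫ ω, ‖stoppedSum P G χ C n ω‖ ∂P
      ≤ ∫ ω, ∑ k ∈ Icc 1 n, (A k).indicator (fun ω' => ‖χ k ω'‖) ω ∂P := by
        refine integral_mono
          (integrable_finsetSum _ fun k hk => (hint k hk).indicator (hA k)).norm
          (integrable_finsetSum _ fun k hk => (hint k hk).norm.indicator (hA k)) fun ω => ?_
        refine (norm_sum_le _ _).trans_eq (sum_congr rfl fun k _ => ?_)
        exact norm_indicator_eq_indicator_norm _ _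
    _ = ∑ k ∈ Icc 1 n, ∫ ω in A k, ‖χ k ω‖ ∂P := by
        rw [integral_finsetSum _ fun k hk => (hint k hk).norm.indicator (hA k)]
        exact sum_congr rfl fun k _ => integral_indicator (hA k)
    _ = ∑ k ∈ Icc 1 n, ∫ ω in A k, f k ω ∂P := sum_congr rfl fun k hk =>
        (setIntegral_condExp (hGle _) (hint k hk).norm (measurableSet_condNormSum_le hG k C)).symm
    _ = ∫ ω, ∑ k ∈ Icc 1 n, (A k).indicator (f k) ω ∂P := by
        rw [integral_finsetSum _ fun k _ => integrable_condExp.indicator (hA k)]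
        exact sum_congr rfl fun k _ => (integral_indicator (hA k)).symm
    _ ≤ ∫ _, C ∂P := by
        refine integral_mono_ae
          (integrable_finsetSum _ fun k _ => integrable_condExp.indicator (hA k))
          (integrable_const C) ?_
        filter_upwards [ae_condExp_norm_nonneg (P := P) (G := G) (χ := χ)] with ω hω
        simpa only [A, Set.indicator_apply, Set.mem_ofPred_eq, condNormSum]
          using sum_ite_partialSum_le (a := fun k => f k ω) hC n fun k _ => hω k
    _ = C := by simp

lemma measure_norm_sum_gt_le (hG : Monotone G) (hGle : ∀ k, G k ≤ m0) {n : ℕ}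
    (hint : ∀ k ∈ Icc 1 n, Integrable (χ k) P) {C M : ℝ} (hC : 0 ≤ C) (hM : 0 < M) :
    P {ω | M < ‖∑ k ∈ Icc 1 n, χ k ω‖} ≤
      P {ω | C < condNormSum P G χ n ω} + ENNReal.ofReal (C / M) := by
  have hmarkov : P {ω | M < ‖stoppedSum P G χ C n ω‖} ≤ ENNReal.ofReal (C / M) := by
    refine (measure_mono (t := {ω | M ≤ ‖stoppedSum P G χ C n ω‖})
      fun _ h => le_of_lt (α := ℝ) h).trans ?_
    rw [ENNReal.le_ofReal_iff_toReal_le (measure_ne_top _ _) (by positivity), ← measureReal_def,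
      le_div_iff₀ hM, mul_comm]
    have hS : Integrable (stoppedSum P G χ C n) P :=
      integrable_finsetSum _ fun k hk =>
        (hint k hk).indicator (hGle _ _ (measurableSet_condNormSum_le hG k C))
    exact (mul_meas_ge_le_integral_of_nonneg (ae_of_all _ fun _ => norm_nonneg _) hS.norm M).trans
      (integral_norm_stoppedSum_le hG hGle hint hC)
  calc P {ω | M < ‖∑ k ∈ Icc 1 n, χ k ω‖}
      ≤ P ({ω | C < condNormSum P G χ n ω} ∪ {ω | M < ‖stoppedSum P G χ C n ω‖}) := by
        refine measure_mono_ae ?_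
        filter_upwards [ae_condExp_norm_nonneg (P := P) (G := G) (χ := χ)] with ω hω hlarge
        by_cases hC : C < condNormSum P G χ n ω
        · exact Or.inl hC
        · right
          change M < ‖stoppedSum P G χ C n ω‖
          rwa [stoppedSum_eq_sum hω (not_lt.1 hC)]
    _ ≤ P {ω | C < condNormSum P G χ n ω} + P {ω | M < ‖stoppedSum P G χ C n ω‖} :=
        measure_union_le _ _
    _ ≤ P {ω | C < condNormSum P G χ n ω} + ENNReal.ofReal (C / M) := by gcongr

end StoppedSum

lemma tendsto_iSup_of_le_add_ofReal_div {ι : Type*} {a b : ι → ℝ → ℝ≥0∞}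
    (hb : Tendsto (fun C => ⨆ i, b i C) atTop (𝓝 0))
    (hab : ∀ i {C M : ℝ}, 0 ≤ C → 0 < M → a i M ≤ b i C + ENNReal.ofReal (C / M)) :
    Tendsto (fun M => ⨆ i, a i M) atTop (𝓝 0) := by
  have hbound : Tendsto (fun M => (⨆ i, b i √M) + ENNReal.ofReal (√M / M)) atTop (𝓝 0) := by
    have : Tendsto (fun M : ℝ => √M / M) atTop (𝓝 0) := by
      simp only [Real.sqrt_div_self', one_div]
      exact tendsto_inv_atTop_zero.comp Real.tendsto_sqrt_atTop
    simpa using (hb.comp Real.tendsto_sqrt_atTop).add (ENNReal.tendsto_ofReal this)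
  refine tendsto_of_tendsto_of_tendsto_of_le_of_le' tendsto_const_nhds hbound
    (Eventually.of_forall fun _ => zero_le) ?_
  filter_upwards [eventually_gt_atTop 0] with M hM
  exact iSup_le fun i => (hab i (Real.sqrt_nonneg M) hM).trans
    (add_le_add_left (le_iSup (fun i => b i √M) i) _)

theorem stmt_5_general {Ω X ι : Type*} [NormedAddCommGroup X]
    {m0 : MeasurableSpace Ω} (P : Measure Ω) [IsProbabilityMeasure P]
    (n : ι → ℕ) (G : ι → ℕ → MeasurableSpace Ω)
    (hGmono : ∀ i, Monotone (G i)) (hGle : ∀ i k, G i k ≤ m0)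
    (χ : ι → ℕ → Ω → X)
    (hint : ∀ i, ∀ k ∈ Finset.Icc 1 (n i), Integrable (χ i k) P)
    (hcond : Filter.Tendsto
      (fun M : ℝ => ⨆ i, P {ω | M <
        ∑ k ∈ Finset.Icc 1 (n i), (P[fun ω' => ‖χ i k ω'‖|G i (k - 1)]) ω})
      Filter.atTop (nhds 0)) :
    Filter.Tendsto
      (fun M : ℝ => ⨆ i, P {ω | M < ‖∑ k ∈ Finset.Icc 1 (n i), χ i k ω‖})
      Filter.atTop (nhds 0) :=
  tendsto_iSup_of_le_add_ofReal_div hcond fun i _ _ hC hM =>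
    measure_norm_sum_gt_le (hGmono i) (hGle i) (hint i) hC hM

/-- Lemma A.3 (ii): transfer of uniform tightness from the conditional sums
to the Banach-space-valued sums. -/
theorem stmt_5 {Ω X ι : Type*} [NormedAddCommGroup X] [NormedSpace ℝ X]
    {m0 : MeasurableSpace Ω} (P : Measure Ω) [IsProbabilityMeasure P]
    (n : ι → ℕ) (G : ι → ℕ → MeasurableSpace Ω)
    (hGmono : ∀ i, Monotone (G i)) (hGle : ∀ i k, G i k ≤ m0)
    (χ : ι → ℕ → Ω → X)
    (hint : ∀ i, ∀ k ∈ Finset.Icc 1 (n i), Integrable (χ i k) P)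
    (hmeas : ∀ i, ∀ k ∈ Finset.Icc 1 (n i), StronglyMeasurable[G i k] (χ i k))
    (hcond : Filter.Tendsto
      (fun M : ℝ => ⨆ i, P {ω | M <
        ∑ k ∈ Finset.Icc 1 (n i), (P[fun ω' => ‖χ i k ω'‖|G i (k - 1)]) ω})
      Filter.atTop (nhds 0)) :
    Filter.Tendsto
      (fun M : ℝ => ⨆ i, P {ω | M < ‖∑ k ∈ Finset.Icc 1 (n i), χ i k ω‖})
      Filter.atTop (nhds 0) :=
  stmt_5_general P n G hGmono hGle χ hint hcond
end

section
/- Let p ≥ 2 and let ν be a probability measure on ℝ with ∫ |z|^p dν(z) < ∞. Then there exists a constant C > 0, depending only on p and ν, such that for every μ ≥ 0 and every probability space carrying a random variable N with the Poisson distribution of mean μ and an i.i.d. sequence V_1, V_2, … of real random variables with common law ν such that N, V_1, V_2, … are jointly independent, one has E[ | ∑_{i=1}^{N} V_i |^p ] ≤ C ( μ^{p/2} + μ + μ^p ). -/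
/-!
Given `N = k`, Jensen's inequality `|V₀ + ⋯ + V_{k-1}|^p ≤ k^(p-1) ∑ |V_i|^p` and the independence
of `N` from each `V_i` give `E|∑_{i<N} V_i|^p ≤ E|V|^p · E[N^p]`, so only the Poisson moment
`E[N^p]` remains. For `μ ≤ 1` every term with `k ≥ 1` carries a factor `μ`, whence
`E_μ[N^p] ≤ e μ E_1[N^p]`. For `μ ≥ 1` split at `k = μ`: with `n = ⌈p⌉`,
`k^p ≤ μ^p + μ^(p-n) k^n` and `k^n ≤ 2^n k(k-1)⋯(k-n+1) + (2n)^n`, while the factorial moments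
of the Poisson law are `E[N(N-1)⋯(N-n+1)] = μ^n`; altogether `E[N^p] = O(μ + μ^p)`.
-/

open MeasureTheory

/-- The state space of the family consisting of the Poisson variable `N`
(index `none`) and the jump sizes `V i` (index `some i`). -/
def jumpSpace : Option ℕ → Type := fun o => match o with
  | none => ℕ
  | some _ => ℝ

/-- The canonical measurable structures on `jumpSpace`. -/
def jumpMS : ∀ o : Option ℕ, MeasurableSpace (jumpSpace o) := fun o => match o with
  | none => inferInstanceAs (MeasurableSpace ℕ)
  | some _ => inferInstanceAs (MeasurableSpace ℝ)

/-- The family of random variables `N, V 0, V 1, …` indexed by `Option ℕ`. -/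
def jumpFun {Ω : Type*} (N : Ω → ℕ) (V : ℕ → Ω → ℝ) : ∀ o : Option ℕ, Ω → jumpSpace o :=
  fun o => match o with
  | none => N
  | some i => V i

open ProbabilityTheory Set Finset
open scoped ENNReal Nat

theorem MeasureTheory.NullMeasurableSet.of_measure_add_measure_compl_le {α : Type*}
    [MeasurableSpace α] {μ : Measure α} [IsFiniteMeasure μ] {s : Set α}
    (h : μ s + μ sᶜ ≤ μ univ) : NullMeasurableSet s μ := by
  set H := toMeasurable μ s
  set H' := toMeasurable μ sᶜ
  have hcover : H ∪ H' = univ :=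
    eq_univ_of_subset (union_subset_union (subset_toMeasurable μ s) (subset_toMeasurable μ sᶜ))
      (union_compl_self s)
  have hoverlap : μ (H ∩ H') = 0 := by
    have := measure_union_add_inter (μ := μ) H (measurableSet_toMeasurable μ sᶜ)
    rw [hcover, measure_toMeasurable, measure_toMeasurable] at this
    refine le_zero_iff.mp ((ENNReal.add_le_add_iff_left (measure_ne_top μ univ)).mp ?_)
    rw [add_zero, this]
    exact h
  refine (measurableSet_toMeasurable μ s).nullMeasurableSet.congr ?_
  refine (ae_eq_set (μ := μ)).mpr ⟨?_, ?_⟩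
  · refine measure_mono_null (fun x hx => ?_) hoverlap
    exact ⟨hx.1, subset_toMeasurable μ sᶜ hx.2⟩
  · simp [sdiff_eq_empty.mpr (subset_toMeasurable μ s)]

theorem AEMeasurable.of_tsum_measure_preimage_singleton_le {α β : Type*}
    [MeasurableSpace α] [MeasurableSpace β] [Countable β] [MeasurableSingletonClass β]
    {μ : Measure α} [IsFiniteMeasure μ] {f : α → β}
    (h : ∑' b, μ (f ⁻¹' {b}) ≤ μ univ) : AEMeasurable f μ := by
  have hfiber (b : β) : NullMeasurableSet (f ⁻¹' {b}) μ := by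
    refine NullMeasurableSet.of_measure_add_measure_compl_le (h.trans' ?_)
    have hcompl : μ (f ⁻¹' {b})ᶜ ≤ ∑' c : ({b}ᶜ : Set β), μ (f ⁻¹' {(c : β)}) := by
      rw [← preimage_compl, ← biUnion_preimage_singleton, biUnion_eq_iUnion]
      exact measure_iUnion_le _
    calc μ (f ⁻¹' {b}) + μ (f ⁻¹' {b})ᶜ
        ≤ ∑' c : ({b} : Set β), μ (f ⁻¹' {(c : β)})
          + ∑' c : ({b}ᶜ : Set β), μ (f ⁻¹' {(c : β)}) := by
          rw [tsum_singleton (f := fun c => μ (f ⁻¹' {c}))]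
          gcongr
      _ = ∑' c, μ (f ⁻¹' {c}) :=
          ENNReal.summable.tsum_add_tsum_compl (f := fun c => μ (f ⁻¹' {c})) ENNReal.summable
  refine NullMeasurable.aemeasurable fun s _ => ?_
  rw [← biUnion_preimage_singleton]
  exact .biUnion s.to_countable fun b _ => hfiber b

theorem Nat.pow_le_two_pow_mul_descFactorial_add (n k : ℕ) :
    k ^ n ≤ 2 ^ n * k.descFactorial n + (2 * n) ^ n := by
  rcases le_or_gt k (2 * n) with hk | hk
  · exact (Nat.pow_le_pow_left hk n).trans (Nat.le_add_left _ _)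
  · calc k ^ n ≤ (2 * (k + 1 - n)) ^ n := Nat.pow_le_pow_left (by omega) n
      _ = 2 ^ n * (k + 1 - n) ^ n := mul_pow 2 _ n
      _ ≤ 2 ^ n * k.descFactorial n := Nat.mul_le_mul_left _ (Nat.pow_sub_le_descFactorial k n)
      _ ≤ _ := Nat.le_add_right _ _

theorem hasSum_pow_mul_descFactorial_div_factorial (x : ℝ) (n : ℕ) :
    HasSum (fun k : ℕ => x ^ k * k.descFactorial n / k !) (x ^ n * Real.exp x) := by
  rw [← hasSum_nat_add_iff' n]
  have hlow : ∑ k ∈ range n, x ^ k * (k.descFactorial n : ℝ) / k ! = 0 :=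
    sum_eq_zero fun k hk => by
      simp [Nat.descFactorial_eq_zero_iff_lt.mpr (mem_range.mp hk)]
  have hshift (k : ℕ) : x ^ (k + n) * ((k + n).descFactorial n : ℝ) / (k + n)!
      = x ^ n * (x ^ k / k !) := by
    have h := Nat.factorial_mul_descFactorial (Nat.le_add_left n k)
    rw [Nat.add_sub_cancel] at h
    rw [← h]
    push_cast
    field_simp
    ring
  rw [hlow, sub_zero, funext hshift, Real.exp_eq_exp_ℝ]
  exact (NormedSpace.expSeries_div_hasSum_exp x).mul_left _

theorem hasSum_poisson_mul_descFactorial (μ : ℝ) (n : ℕ) :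
    HasSum (fun k : ℕ => Real.exp (-μ) * μ ^ k / k ! * k.descFactorial n) (μ ^ n) := by
  have h := (hasSum_pow_mul_descFactorial_div_factorial μ n).mul_left (Real.exp (-μ))
  rw [mul_left_comm, ← Real.exp_add, neg_add_cancel, Real.exp_zero, mul_one] at h
  convert! h using 2 with k
  ring

theorem ENNReal.tsum_ofReal_le_of_hasSum {ι : Type*} {f g : ι → ℝ} {a : ℝ}
    (hfg : ∀ i, f i ≤ g i) (hg0 : ∀ i, 0 ≤ g i) (hg : HasSum g a) :
    ∑' i, ENNReal.ofReal (f i) ≤ ENNReal.ofReal a :=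
  calc ∑' i, ENNReal.ofReal (f i) ≤ ∑' i, ENNReal.ofReal (g i) :=
        ENNReal.tsum_le_tsum fun i => ENNReal.ofReal_le_ofReal (hfg i)
    _ = ENNReal.ofReal a := by rw [← ENNReal.ofReal_tsum_of_nonneg hg0 hg.summable, hg.tsum_eq]

theorem Real.rpow_le_rpow_add_rpow_sub_mul_pow {x μ p : ℝ} {n : ℕ} (hx : 0 ≤ x) (hμ : 0 < μ)
    (hp : 0 ≤ p) (hpn : p ≤ n) : x ^ p ≤ μ ^ p + μ ^ (p - n) * x ^ n := by
  rcases le_or_gt x μ with hxμ | hμx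
  · have : 0 ≤ μ ^ (p - n) * x ^ n := by positivity
    linarith [Real.rpow_le_rpow hx hxμ hp]
  · have hx0 : 0 < x := hμ.trans hμx
    calc x ^ p = x ^ (p - n) * x ^ n := by
          rw [← Real.rpow_natCast, ← Real.rpow_add hx0, sub_add_cancel]
      _ ≤ μ ^ (p - n) * x ^ n :=
          mul_le_mul_of_nonneg_right (Real.rpow_le_rpow_of_nonpos hμ hμx.le (by linarith))
            (by positivity)
      _ ≤ _ := le_add_of_nonneg_left (Real.rpow_nonneg hμ.le p)

theorem tsum_poisson_rpow_le_of_one_le {μ p : ℝ} {n : ℕ} (hμ : 1 ≤ μ) (hp : 0 ≤ p)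
    (hpn : p ≤ n) :
    ∑' k : ℕ, ENNReal.ofReal (Real.exp (-μ) * μ ^ k / k ! * (k : ℝ) ^ p)
      ≤ ENNReal.ofReal ((1 + 2 ^ n + (2 * n) ^ n) * μ ^ p) := by
  have hμ0 : 0 < μ := one_pos.trans_le hμ
  set w : ℕ → ℝ := fun k => Real.exp (-μ) * μ ^ k / (k ! : ℝ)
  have hw := hasSum_poisson_mul_descFactorial μ
  have hg := ((hw 0).mul_left (μ ^ p + (2 * n) ^ n * μ ^ (p - n))).add
    ((hw n).mul_left (2 ^ n * μ ^ (p - n)))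
  refine (ENNReal.tsum_ofReal_le_of_hasSum (fun k => ?_) (fun k => by positivity) hg).trans
    (ENNReal.ofReal_le_ofReal ?_)
  · have hk : (k : ℝ) ^ n ≤ 2 ^ n * k.descFactorial n + (2 * n) ^ n := by
      exact_mod_cast Nat.pow_le_two_pow_mul_descFactorial_add n k
    calc w k * (k : ℝ) ^ p ≤ w k * (μ ^ p + μ ^ (p - n) * (k : ℝ) ^ n) := by
          gcongr
          exact Real.rpow_le_rpow_add_rpow_sub_mul_pow k.cast_nonneg hμ0 hp hpn
      _ ≤ w k * (μ ^ p + μ ^ (p - n) * (2 ^ n * k.descFactorial n + (2 * n) ^ n)) := by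
          gcongr
      _ = _ := by simp only [w, Nat.descFactorial_zero, Nat.cast_one]; ring
  · have hpow : μ ^ (p - n) * μ ^ n = μ ^ p := by
      rw [← Real.rpow_natCast, ← Real.rpow_add hμ0, sub_add_cancel]
    have hle : μ ^ (p - n) ≤ μ ^ p := Real.rpow_le_rpow_of_exponent_le hμ (by linarith)
    have : (0 : ℝ) ≤ (2 * n) ^ n := by positivity
    calc (μ ^ p + (2 * n) ^ n * μ ^ (p - n)) * μ ^ 0 + 2 ^ n * μ ^ (p - n) * μ ^ n
        = μ ^ p + 2 ^ n * μ ^ p + (2 * n) ^ n * μ ^ (p - n) := by rw [← hpow]; ring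
      _ ≤ _ := by nlinarith

theorem tsum_poisson_rpow_le_of_le_one {μ p : ℝ} (hμ0 : 0 ≤ μ) (hμ : μ ≤ 1) (hp : 0 < p) :
    ∑' k : ℕ, ENNReal.ofReal (Real.exp (-μ) * μ ^ k / k ! * (k : ℝ) ^ p)
      ≤ ENNReal.ofReal (Real.exp 1 * μ)
        * ∑' k : ℕ, ENNReal.ofReal (Real.exp (-1) * 1 ^ k / k ! * (k : ℝ) ^ p) := by
  rw [← ENNReal.tsum_mul_left]
  refine ENNReal.tsum_le_tsum fun k => ?_
  rw [← ENNReal.ofReal_mul (by positivity)]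
  refine ENNReal.ofReal_le_ofReal ?_
  rcases Nat.eq_zero_or_pos k with rfl | hk
  · simp [Real.zero_rpow hp.ne']
  · have hweight : Real.exp (-μ) * μ ^ k ≤ μ :=
      calc Real.exp (-μ) * μ ^ k ≤ 1 * μ :=
            mul_le_mul (Real.exp_le_one_iff.mpr (by linarith)) (pow_le_of_le_one hμ0 hμ hk.ne')
              (by positivity) zero_le_one
        _ = μ := one_mul μ
    have hμ' : Real.exp 1 * μ * (Real.exp (-1) * 1 ^ k) = μ := by
      rw [one_pow, mul_one, mul_comm, ← mul_assoc, ← Real.exp_add, neg_add_cancel, Real.exp_zero,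
        one_mul]
    calc Real.exp (-μ) * μ ^ k / k ! * (k : ℝ) ^ p
        = Real.exp (-μ) * μ ^ k * ((k : ℝ) ^ p / k !) := by ring
      _ ≤ μ * ((k : ℝ) ^ p / k !) := by gcongr
      _ = Real.exp 1 * μ * (Real.exp (-1) * 1 ^ k) * ((k : ℝ) ^ p / k !) := by rw [hμ']
      _ = _ := by ring

theorem exists_tsum_poisson_rpow_le {p : ℝ} (hp : 0 < p) :
    ∃ K > 0, ∀ μ : ℝ, 0 ≤ μ →
      ∑' k : ℕ, ENNReal.ofReal (Real.exp (-μ) * μ ^ k / k ! * (k : ℝ) ^ p)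
        ≤ ENNReal.ofReal (K * (μ + μ ^ p)) := by
  set n := ⌈p⌉₊
  set K₀ : ℝ := 1 + 2 ^ n + (2 * n) ^ n
  have hK₀ : 0 < K₀ := by positivity
  have hlarge {μ : ℝ} (hμ : 1 ≤ μ) :
      ∑' k : ℕ, ENNReal.ofReal (Real.exp (-μ) * μ ^ k / k ! * (k : ℝ) ^ p)
        ≤ ENNReal.ofReal (K₀ * μ ^ p) :=
    tsum_poisson_rpow_le_of_one_le hμ hp.le (Nat.le_ceil p)
  refine ⟨Real.exp 1 * K₀, by positivity, fun μ hμ => ?_⟩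
  have hμp : 0 ≤ μ ^ p := by positivity
  have he : 1 ≤ Real.exp 1 := Real.one_le_exp zero_le_one
  rcases le_total μ 1 with hμ1 | hμ1
  · refine (tsum_poisson_rpow_le_of_le_one hμ hμ1 hp).trans ?_
    grw [hlarge le_rfl, Real.one_rpow, mul_one, ← ENNReal.ofReal_mul (by positivity)]
    exact ENNReal.ofReal_le_ofReal (by nlinarith [mul_pos (Real.exp_pos 1) hK₀])
  · refine (hlarge hμ1).trans (ENNReal.ofReal_le_ofReal ?_)
    nlinarith [mul_nonneg (mul_nonneg (sub_nonneg.2 he) hK₀.le) hμp,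
      mul_nonneg (mul_nonneg (Real.exp_pos 1).le hK₀.le) hμ]

theorem enorm_sum_rpow_le_card_rpow_mul_sum {ι E : Type*} [NormedAddCommGroup E]
    (s : Finset ι) (x : ι → E) {p : ℝ} (hp : 1 ≤ p) :
    ‖∑ i ∈ s, x i‖ₑ ^ p ≤ (#s : ℝ≥0∞) ^ (p - 1) * ∑ i ∈ s, ‖x i‖ₑ ^ p :=
  (ENNReal.rpow_le_rpow (enorm_sum_le s x) (by linarith)).trans
    (ENNReal.rpow_sum_le_const_mul_sum_rpow s _ hp)

theorem ENNReal.natCast_rpow_sub_one_mul (k : ℕ) {p : ℝ} (hp : 1 ≤ p) :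
    (k : ℝ≥0∞) ^ (p - 1) * k = (k : ℝ≥0∞) ^ p := by
  rcases eq_or_ne k 0 with rfl | hk
  · rcases hp.eq_or_lt with rfl | hp
    · simp
    · simp [ENNReal.zero_rpow_of_pos (by linarith : 0 < p),
        ENNReal.zero_rpow_of_pos (sub_pos.mpr hp)]
  · conv_rhs => rw [← sub_add_cancel p 1]
    rw [ENNReal.rpow_add _ _ (by exact_mod_cast hk) (ENNReal.natCast_ne_top k), ENNReal.rpow_one]

theorem ProbabilityTheory.IndepFun.setLIntegral_preimage_eq_mul {Ω α β : Type*}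
    [MeasurableSpace Ω] [MeasurableSpace α] [MeasurableSpace β] {P : Measure Ω}
    {N : Ω → α} {X : Ω → β} (h : IndepFun N X P) (hN : AEMeasurable N P)
    (hX : AEMeasurable X P) {s : Set α} (hs : MeasurableSet s) {g : β → ℝ≥0∞}
    (hg : Measurable g) :
    ∫⁻ ω in N ⁻¹' s, g (X ω) ∂P = P (N ⁻¹' s) * ∫⁻ ω, g (X ω) ∂P := by
  have hind : (N ⁻¹' s).indicator (fun ω => g (X ω))
      = fun ω => s.indicator 1 (N ω) * g (X ω) := by
    ext ω
    by_cases hω : N ω ∈ s <;> simp [hω]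
  rw [← lintegral_indicator₀ (hN.nullMeasurable hs), hind,
    lintegral_mul_eq_lintegral_mul_lintegral_of_indepFun''
      (f := fun ω => s.indicator 1 (N ω)) (g := fun ω => g (X ω))
      ((measurable_one.indicator hs).comp_aemeasurable hN) (hg.comp_aemeasurable hX)
      (h.comp (measurable_one.indicator hs) hg)]
  congr 1
  rw [← lintegral_indicator_one₀ (hN.nullMeasurable hs)]
  rfl

theorem lintegral_enorm_sum_range_rpow_le {Ω E : Type*} [MeasurableSpace Ω]
    [NormedAddCommGroup E] [MeasurableSpace E] [OpensMeasurableSpace E] {P : Measure Ω}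
    {N : Ω → ℕ} {V : ℕ → Ω → E} {ν : Measure E} {p : ℝ} (hp : 1 ≤ p)
    (hN : AEMeasurable N P) (hV : ∀ i, AEMeasurable (V i) P) (hlaw : ∀ i, P.map (V i) = ν)
    (hindep : ∀ i, IndepFun N (V i) P) :
    ∫⁻ ω, ‖∑ i ∈ range (N ω), V i ω‖ₑ ^ p ∂P
      ≤ (∫⁻ z, ‖z‖ₑ ^ p ∂ν) * ∑' k : ℕ, P (N ⁻¹' {k}) * (k : ℝ≥0∞) ^ p := by
  set M := ∫⁻ z, ‖z‖ₑ ^ p ∂ν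
  have hg : Measurable fun z : E => ‖z‖ₑ ^ p := by fun_prop
  have hslice (k : ℕ) :
      ∫⁻ ω in N ⁻¹' {k}, (k : ℝ≥0∞) ^ (p - 1) * ∑ i ∈ range k, ‖V i ω‖ₑ ^ p ∂P
        = M * (P (N ⁻¹' {k}) * (k : ℝ≥0∞) ^ p) := by
    have hterm (i : ℕ) : ∫⁻ ω in N ⁻¹' {k}, ‖V i ω‖ₑ ^ p ∂P = P (N ⁻¹' {k}) * M := by
      rw [(hindep i).setLIntegral_preimage_eq_mul hN (hV i) (measurableSet_singleton k) hg,
        ← lintegral_map' hg.aemeasurable (hV i), hlaw i]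
    rw [lintegral_const_mul' _ _ (ENNReal.rpow_ne_top_of_nonneg (by linarith)
        (ENNReal.natCast_ne_top k)),
      lintegral_finsetSum' (f := fun i ω => ‖V i ω‖ₑ ^ p) _
        fun i _ => (hg.comp_aemeasurable (hV i)).restrict]
    simp only [hterm, sum_const, card_range, nsmul_eq_mul]
    rw [← ENNReal.natCast_rpow_sub_one_mul k hp]
    ring
  calc ∫⁻ ω, ‖∑ i ∈ range (N ω), V i ω‖ₑ ^ p ∂P
      ≤ ∫⁻ ω, ∑' k : ℕ, (N ⁻¹' {k}).indicator
          (fun ω => (k : ℝ≥0∞) ^ (p - 1) * ∑ i ∈ range k, ‖V i ω‖ₑ ^ p) ω ∂P := by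
        refine lintegral_mono fun ω => le_trans ?_ (ENNReal.le_tsum (N ω))
        rw [indicator_of_mem (s := N ⁻¹' {N ω}) rfl]
        simpa using enorm_sum_rpow_le_card_rpow_mul_sum (range (N ω)) (V · ω) hp
    _ = ∑' k : ℕ, M * (P (N ⁻¹' {k}) * (k : ℝ≥0∞) ^ p) := by
        rw [lintegral_tsum fun k => ?_]
        · simp_rw [← hslice, lintegral_indicator₀ (hN.nullMeasurable (measurableSet_singleton _))]
        · refine AEMeasurable.indicator₀ ?_ (hN.nullMeasurable (measurableSet_singleton k))
          fun_prop
    _ = M * ∑' k : ℕ, P (N ⁻¹' {k}) * (k : ℝ≥0∞) ^ p := ENNReal.tsum_mul_left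

theorem Real.ofReal_abs_rpow_eq_enorm_rpow (x : ℝ) {p : ℝ} (hp : 0 ≤ p) :
    ENNReal.ofReal (|x| ^ p) = ‖x‖ₑ ^ p := by
  rw [Real.enorm_eq_ofReal_abs, ENNReal.ofReal_rpow_of_nonneg (abs_nonneg x) hp]

theorem lintegral_enorm_rpow_eq_ofReal_integral {α : Type*} [MeasurableSpace α] {μ : Measure α}
    {f : α → ℝ} {p : ℝ} (hp : 0 ≤ p) (hf : Integrable (fun x => |f x| ^ p) μ) :
    ∫⁻ x, ‖f x‖ₑ ^ p ∂μ = ENNReal.ofReal (∫ x, |f x| ^ p ∂μ) := by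
  rw [ofReal_integral_eq_lintegral_ofReal hf (.of_forall fun x => by positivity)]
  simp_rw [Real.ofReal_abs_rpow_eq_enorm_rpow _ hp]

theorem integral_abs_rpow_le_of_lintegral_enorm_rpow_le {α : Type*} [MeasurableSpace α]
    {μ : Measure α} {f : α → ℝ} {p b : ℝ} (hp : 0 ≤ p) (hb : 0 ≤ b)
    (h : ∫⁻ x, ‖f x‖ₑ ^ p ∂μ ≤ ENNReal.ofReal b) : ∫ x, |f x| ^ p ∂μ ≤ b := by
  refine (Real.le_norm_self _).trans ((norm_integral_le_lintegral_norm _).trans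
    (ENNReal.toReal_le_of_le_ofReal hb ?_))
  simpa only [Real.norm_eq_abs, abs_of_nonneg (Real.rpow_nonneg (abs_nonneg _) p),
    Real.ofReal_abs_rpow_eq_enorm_rpow _ hp] using h

theorem aemeasurable_of_measure_fiber_eq_poisson {Ω : Type*} [MeasurableSpace Ω]
    {P : Measure Ω} [IsProbabilityMeasure P] {N : Ω → ℕ} {μ : ℝ} (hμ : 0 ≤ μ)
    (hN : ∀ k : ℕ, P {ω | N ω = k} = ENNReal.ofReal (Real.exp (-μ) * μ ^ k / k !)) :
    AEMeasurable N P := by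
  have hw : HasSum (fun k : ℕ => Real.exp (-μ) * μ ^ k / k !) 1 := by
    simpa using hasSum_poisson_mul_descFactorial μ 0
  refine .of_tsum_measure_preimage_singleton_le (le_of_eq ?_)
  rw [measure_univ, ← ENNReal.ofReal_one, ← hw.tsum_eq,
    ENNReal.ofReal_tsum_of_nonneg (fun k => by positivity) hw.summable]
  exact tsum_congr hN

/-- Moment bound for a compound Poisson random sum (proof of Lemma 4.1):
`E[|∑_{i=1}^N V_i|^p] ≤ C (μ^{p/2} + μ + μ^p)` with `C` depending only on `p` and `ν`. -/
theorem stmt_8 (p : ℝ) (hp : 2 ≤ p) (ν : Measure ℝ) [IsProbabilityMeasure ν]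
    (hmom : Integrable (fun z => |z| ^ p) ν) :
    ∃ C > 0, ∀ (Ω : Type) [MeasurableSpace Ω] (P : Measure Ω),
      IsProbabilityMeasure P →
      ∀ μ : ℝ, 0 ≤ μ →
      ∀ (N : Ω → ℕ) (V : ℕ → Ω → ℝ),
      (∀ k : ℕ, P {ω | N ω = k}
        = ENNReal.ofReal (Real.exp (-μ) * μ ^ k / Nat.factorial k)) →
      (∀ i, Measure.map (V i) P = ν) →
      ProbabilityTheory.iIndepFun (m := jumpMS) (jumpFun N V) P →
      ∫ ω, |∑ i ∈ Finset.range (N ω), V i ω| ^ p ∂P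
        ≤ C * (μ ^ (p / 2) + μ + μ ^ p) := by
  have hp0 : 0 ≤ p := by linarith
  obtain ⟨K, hK, hpoisson⟩ := exists_tsum_poisson_rpow_le (by linarith : 0 < p)
  set m := ∫ z, |z| ^ p ∂ν
  have hm : 0 ≤ m := integral_nonneg fun z => by positivity
  refine ⟨m * K + 1, by positivity, fun Ω _ P _ μ hμ N V hN hV hind => ?_⟩
  -- Nothing makes `N` measurable; that its fibres have outer measures summing to `1` suffices.
  have hNm : AEMeasurable N P := aemeasurable_of_measure_fiber_eq_poisson hμ hN
  have hVm (i : ℕ) : AEMeasurable (V i) P :=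
    .of_map_ne_zero (by rw [hV i]; exact IsProbabilityMeasure.ne_zero ν)
  have hfiber (k : ℕ) : P (N ⁻¹' {k}) * (k : ℝ≥0∞) ^ p
      = ENNReal.ofReal (Real.exp (-μ) * μ ^ k / k ! * (k : ℝ) ^ p) := by
    rw [← ENNReal.ofReal_natCast, ENNReal.ofReal_rpow_of_nonneg k.cast_nonneg hp0,
      ENNReal.ofReal_mul (by positivity), ← hN k]
    rfl
  have hlint : ∫⁻ ω, ‖∑ i ∈ range (N ω), V i ω‖ₑ ^ p ∂P
      ≤ ENNReal.ofReal (m * (K * (μ + μ ^ p))) :=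
    calc _ ≤ _ := lintegral_enorm_sum_range_rpow_le (by linarith) hNm hVm hV
          fun i => hind.indepFun (by simp : (none : Option ℕ) ≠ some i)
      _ ≤ ENNReal.ofReal m * ENNReal.ofReal (K * (μ + μ ^ p)) := by
          simp_rw [lintegral_enorm_rpow_eq_ofReal_integral hp0 hmom, hfiber]
          gcongr
          exact hpoisson μ hμ
      _ = _ := (ENNReal.ofReal_mul hm).symm
  have hμp2 : 0 ≤ μ ^ (p / 2) := by positivity
  calc _ ≤ m * (K * (μ + μ ^ p)) :=
        integral_abs_rpow_le_of_lintegral_enorm_rpow_le hp0 (by positivity) hlint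
    _ ≤ (m * K + 1) * (μ ^ (p / 2) + μ + μ ^ p) := by
        nlinarith [mul_nonneg (mul_nonneg hm hK.le) hμp2, Real.rpow_nonneg hμ p]
end
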